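/- arXiv:2409.17218 — 2 statements merged into one kernel-verified Lean document; each statement's English description precedes it below -/
import Mathlib

section
/- For all permutations g,g',g₀∈S_N one has #(g)−#(P(g)∨P(g'))≥#(q_{g₀}(g))−#(q_{g₀}(g)∨q_{g₀}(g')). Consequently the Cayley distance dominates the partition distance of the cycle partitions, which dominates the partition distance of the coarse grainings: d(g,g')≥d(P(g),P(g'))≥d(q_{g₀}(g),q_{g₀}(g')). -/
open scoped Classical

noncomputable section

namespace RTN

/-! ## Set partitions -/

/-- Number of blocks of a set partition (as an integer). -/
def nb {α : Type*} (p : Setoid α) : ℤ := Nat.card (Quotient p)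

/-- The partition distance `d(p,q) = #(p) + #(q) - 2 #(p ⊔ q)`. -/
def pdist {α : Type*} (p q : Setoid α) : ℤ := nb p + nb q - 2 * nb (p ⊔ q)

lemma pdist_comm {α : Type*} (p q : Setoid α) : pdist p q = pdist q p := by
  unfold pdist
  rw [sup_comm p q]
  ring

/-- `k` is a singlet (block of size one) of the partition `p`. -/
def IsSinglet {α : Type*} (p : Setoid α) (k : α) : Prop := ∀ y, p.r k y → y = k

/-- The number of singlets `#₁(p)` of a partition. -/
def nS {α : Type*} (p : Setoid α) : ℤ := Nat.card {k : α // IsSinglet p k}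

/-- The singlet distance `d₁(s₁,s₂) = #₁(s₁) + #₁(s₂) - 2 #₁(s₁ ⊔ s₂)`. -/
def sdist {α : Type*} (s₁ s₂ : Setoid α) : ℤ := nS s₁ + nS s₂ - 2 * nS (s₁ ⊔ s₂)

/-- The singlet pattern `s(p)`: the coarsest partition whose singlets are exactly
those of `p` (all non-singlet elements lie in one block). -/
def spat {α : Type*} (p : Setoid α) : Setoid α where
  r x y := x = y ∨ (¬ IsSinglet p x ∧ ¬ IsSinglet p y)
  iseqv := by
    refine ⟨fun x => Or.inl rfl, ?_, ?_⟩
    · intro x y h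
      rcases h with rfl | ⟨hx, hy⟩
      · exact Or.inl rfl
      · exact Or.inr ⟨hy, hx⟩
    · intro x y z h1 h2
      rcases h1 with rfl | ⟨hx, hy⟩
      · exact h2
      · rcases h2 with rfl | ⟨_, hz⟩
        · exact Or.inr ⟨hx, hy⟩
        · exact Or.inr ⟨hx, hz⟩

/-- The bit `b^k(p)`: `0` if `p` has a singlet at `k`, else `1`. -/
def bbit {α : Type*} (p : Setoid α) (k : α) : ℤ := if IsSinglet p k then 0 else 1

/-- The size of the block of `p` containing `x`. -/
def blockSize {α : Type*} (p : Setoid α) (x : α) : ℕ := Nat.card {y : α // p.r x y}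

noncomputable instance {α : Type*} [Finite α] (s : Setoid α) : Fintype (Quotient s) :=
  Fintype.ofFinite _

/-! ## Permutations -/

/-- The partition of `α` into orbits (cycles) of a permutation. -/
def orbitSetoid {α : Type*} (g : Equiv.Perm α) : Setoid α where
  r x y := ∃ k : ℤ, (g ^ k) x = y
  iseqv := by
    refine ⟨fun x => ⟨0, by simp⟩, ?_, ?_⟩
    · rintro x y ⟨k, rfl⟩
      exact ⟨-k, by simp [← Equiv.Perm.mul_apply, ← zpow_add]⟩
    · rintro x y z ⟨k, rfl⟩ ⟨l, rfl⟩
      exact ⟨l + k, by rw [zpow_add, Equiv.Perm.mul_apply]⟩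

/-- The number of cycles `#(g)` of a permutation (fixed points included). -/
def ncyc {α : Type*} (g : Equiv.Perm α) : ℤ := nb (orbitSetoid g)

/-- The Cayley distance `d(g,h) = N - #(g h⁻¹)`. -/
def cayley {α : Type*} [Fintype α] (g h : Equiv.Perm α) : ℤ :=
  (Fintype.card α : ℤ) - ncyc (g * h⁻¹)

lemma orbitSetoid_inv {α : Type*} (g : Equiv.Perm α) : orbitSetoid g⁻¹ = orbitSetoid g := by
  apply Setoid.ext
  intro x y
  constructor
  · rintro ⟨k, hk⟩
    exact ⟨-k, by rw [← inv_zpow']; exact hk⟩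
  · rintro ⟨k, hk⟩
    exact ⟨-k, by rw [inv_zpow', neg_neg]; exact hk⟩

lemma cayley_comm {α : Type*} [Fintype α] (g h : Equiv.Perm α) : cayley g h = cayley h g := by
  unfold cayley ncyc
  rw [show h * g⁻¹ = (g * h⁻¹)⁻¹ by rw [mul_inv_rev, inv_inv], orbitSetoid_inv]

/-- Coarse graining of a partition `p` by the blocks of `P(g₀)`: the partition of the set
of blocks of `P(g₀)` induced by `p ⊔ P(g₀)`. -/
def coarse {α : Type*} (g₀ : Equiv.Perm α) (p : Setoid α) :
    Setoid (Quotient (orbitSetoid g₀)) where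
  r u v := ∃ x y : α, Quotient.mk (orbitSetoid g₀) x = u ∧ Quotient.mk (orbitSetoid g₀) y = v ∧
    (p ⊔ orbitSetoid g₀).r x y
  iseqv := by
    refine ⟨?_, ?_, ?_⟩
    · intro u
      obtain ⟨x, rfl⟩ := Quotient.exists_rep u
      exact ⟨x, x, rfl, rfl, (p ⊔ orbitSetoid g₀).iseqv.refl x⟩
    · rintro u v ⟨x, y, hx, hy, hxy⟩
      exact ⟨y, x, hy, hx, (p ⊔ orbitSetoid g₀).iseqv.symm hxy⟩
    · rintro u v w ⟨x, y, hx, hy, hxy⟩ ⟨y', z, hy', hz, hyz⟩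
      refine ⟨x, z, hx, hz, ?_⟩
      have h1 : (orbitSetoid g₀).r y y' := Quotient.exact (hy.trans hy'.symm)
      have h2 : (p ⊔ orbitSetoid g₀).r y y' :=
        (le_sup_right : orbitSetoid g₀ ≤ p ⊔ orbitSetoid g₀) h1
      exact (p ⊔ orbitSetoid g₀).iseqv.trans hxy
        ((p ⊔ orbitSetoid g₀).iseqv.trans h2 hyz)

/-- The coarse graining `q_{g₀}(g) ∈ P_{#(g₀)}` of a permutation `g`. -/
def qc {α : Type*} (g₀ g : Equiv.Perm α) : Setoid (Quotient (orbitSetoid g₀)) :=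
  coarse g₀ (orbitSetoid g)

/-! ## Standard reflected-entropy boundary elements -/

/-- `g_B`, the product of `n` disjoint `m`-cycles `(k,ℓ) ↦ (k,ℓ+1)`. -/
def gB (n m : ℕ) : Equiv.Perm (Fin n × Fin m) :=
  Equiv.prodCongr (Equiv.refl (Fin n)) (finRotate m)

/-- `γ`, cyclically shifting `k ↦ k+1` on the elements with `ℓ` in the lower half,
fixing the rest. -/
def gamma (n m : ℕ) : Equiv.Perm (Fin n × Fin m) where
  toFun x := if m / 2 ≤ (x.2 : ℕ) then (finRotate n x.1, x.2) else x
  invFun x := if m / 2 ≤ (x.2 : ℕ) then ((finRotate n).symm x.1, x.2) else x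
  left_inv := by
    intro x
    by_cases h : m / 2 ≤ (x.2 : ℕ) <;> simp [h, -finRotate_apply, -finRotate_symm_apply]
  right_inv := by
    intro x
    by_cases h : m / 2 ≤ (x.2 : ℕ) <;> simp [h, -finRotate_apply, -finRotate_symm_apply]

/-- `g_A = γ⁻¹ g_B γ`. -/
def gA (n m : ℕ) : Equiv.Perm (Fin n × Fin m) :=
  (gamma n m)⁻¹ * gB n m * gamma n m

/-- For even `m`, `Fin m` splits into an upper and a lower half. -/
def halfEquiv (m : ℕ) (hm : m % 2 = 0) : Fin 2 × Fin (m / 2) ≃ Fin m :=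
  finProdFinEquiv.trans (finCongr (by omega))

/-- `X`, the product of the `2n` disjoint `(m/2)`-cycles cyclically permuting the
upper and the lower half of each block `k`. -/
def Xel (n m : ℕ) (hm : m % 2 = 0) : Equiv.Perm (Fin n × Fin m) :=
  Equiv.prodCongr (Equiv.refl (Fin n))
    ((halfEquiv m hm).permCongr
      (Equiv.prodCongr (Equiv.refl (Fin 2)) (finRotate (m / 2))))

/-- The set of blocks of `P(X)`; it has `2n` elements. -/
abbrev BX (n m : ℕ) (hm : m % 2 = 0) := Quotient (orbitSetoid (Xel n m hm))

/-- `q_A = q_X(g_A) ∈ P_{2n}`. -/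
def qAel (n m : ℕ) (hm : m % 2 = 0) : Setoid (BX n m hm) :=
  qc (Xel n m hm) (gA n m)

/-- `q_B = q_X(g_B) ∈ P_{2n}`. -/
def qBel (n m : ℕ) (hm : m % 2 = 0) : Setoid (BX n m hm) :=
  qc (Xel n m hm) (gB n m)

/-! ## Doubled elements (two copies) -/

/-- Two copies of the index set `{1,…,mn}`. -/
abbrev DIdx (n m : ℕ) := (Fin n × Fin m) ⊕ (Fin n × Fin m)

/-- `g̃_A = g_A ⊕ g_A`. -/
def gAt (n m : ℕ) : Equiv.Perm (DIdx n m) := Equiv.sumCongr (gA n m) (gA n m)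

/-- `g̃_B = g_B ⊕ g_B`. -/
def gBt (n m : ℕ) : Equiv.Perm (DIdx n m) := Equiv.sumCongr (gB n m) (gB n m)

/-- `X̃ = X ⊕ X`. -/
def Xt (n m : ℕ) (hm : m % 2 = 0) : Equiv.Perm (DIdx n m) :=
  Equiv.sumCongr (Xel n m hm) (Xel n m hm)

/-- The set of blocks of `P(X̃)`; it has `4n` elements. -/
abbrev BXt (n m : ℕ) (hm : m % 2 = 0) := Quotient (orbitSetoid (Xt n m hm))

/-- `q̃_A = q_{X̃}(g̃_A) ∈ P_{4n}`. -/
def qAt (n m : ℕ) (hm : m % 2 = 0) : Setoid (BXt n m hm) :=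
  qc (Xt n m hm) (gAt n m)

/-- `q̃_B = q_{X̃}(g̃_B) ∈ P_{4n}`. -/
def qBt (n m : ℕ) (hm : m % 2 = 0) : Setoid (BXt n m hm) :=
  qc (Xt n m hm) (gBt n m)

/-- A block of `P(X̃)` lies in the first copy. -/
def inCopy1 {n m : ℕ} {hm : m % 2 = 0} (u : BXt n m hm) : Prop :=
  ∃ x, Quotient.mk (orbitSetoid (Xt n m hm)) (Sum.inl x) = u

/-- `#₁⁽¹⁾(q)`: the number of singlets of `q` among the first-copy positions. -/
def nS1 {n m : ℕ} {hm : m % 2 = 0} (q : Setoid (BXt n m hm)) : ℤ :=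
  Nat.card {u : BXt n m hm // IsSinglet q u ∧ inCopy1 u}

/-- `#₁⁽²⁾(q)`: the number of singlets of `q` among the second-copy positions. -/
def nS2 {n m : ℕ} {hm : m % 2 = 0} (q : Setoid (BXt n m hm)) : ℤ :=
  Nat.card {u : BXt n m hm // IsSinglet q u ∧ ¬ inCopy1 u}

/-- `τ ∈ P_{4n}`, the two-block partition separating the two copies. -/
def tau (n m : ℕ) (hm : m % 2 = 0) : Setoid (BXt n m hm) where
  r u v := inCopy1 u ↔ inCopy1 v
  iseqv := ⟨fun _ => Iff.rfl, Iff.symm, Iff.trans⟩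

/-! ## Graphs, cuts and optimization programs -/

variable {V : Type*}

/-- Sum of an edge function along (the edge list of) a walk, with multiplicity. -/
def wkSum {β : Type*} [AddCommMonoid β] {G : SimpleGraph V} {x y : V}
    (f : Sym2 V → β) (L : G.Walk x y) : β :=
  (L.edges.map f).sum

variable [Fintype V]

/-- Sum of an edge weight function over a set of edges. -/
def wsum (f : Sym2 V → ℝ) (S : Set (Sym2 V)) : ℝ :=
  ∑ e ∈ Finset.univ.filter (· ∈ S), f e

/-- The cut surface `μ(r)`: edges of `G` with one endpoint in `r`, the other outside. -/
def mu (G : SimpleGraph V) (r : Set V) : Set (Sym2 V) :=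
  {e | e ∈ G.edgeSet ∧ ∃ x y, e = s(x, y) ∧ x ∈ r ∧ y ∉ r}

/-- `μ(r₁:r₂)`: edges of `G` with an endpoint in `r₁` and an endpoint in `r₂`. -/
def mu2 (G : SimpleGraph V) (r₁ r₂ : Set V) : Set (Sym2 V) :=
  {e | e ∈ G.edgeSet ∧ ∃ x y, e = s(x, y) ∧ x ∈ r₁ ∧ y ∈ r₂}

/-- `r` is a cut for `X : Y`. -/
def IsCut (X Y r : Set V) : Prop := X ⊆ r ∧ Y ⊆ rᶜ

/-- The minimal cut area `𝒜(X:Y)`. -/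
def minCut (G : SimpleGraph V) (w : Sym2 V → ℝ) (X Y : Set V) : ℝ :=
  sInf {a | ∃ r : Set V, IsCut X Y r ∧ a = wsum w (mu G r)}

/-- `(α,β,γ)` is a triway cut for `(A,B,C)`. -/
def IsTriway (A B C α β γ : Set V) : Prop :=
  α ∪ β ∪ γ = Set.univ ∧ Disjoint α β ∧ Disjoint β γ ∧ Disjoint α γ ∧
    A ⊆ α ∧ B ⊆ β ∧ C ⊆ γ

/-- The area of a triway cut with tensions `(t_{A:B}, t_{B:C}, t_{C:A})`. -/
def triArea (G : SimpleGraph V) (w : Sym2 V → ℝ) (tAB tBC tCA : ℝ)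
    (α β γ : Set V) : ℝ :=
  tAB * wsum w (mu2 G α β) + tBC * wsum w (mu2 G β γ) + tCA * wsum w (mu2 G γ α)

/-- The minimal triway cut area `𝒜_t(A:B:C)`. -/
def triCut (G : SimpleGraph V) (w : Sym2 V → ℝ) (tAB tBC tCA : ℝ)
    (A B C : Set V) : ℝ :=
  sInf {a | ∃ α β γ : Set V, IsTriway A B C α β γ ∧ a = triArea G w tAB tBC tCA α β γ}

/-- Boundary data: `∂ = A ⊔ B ⊔ C` (pairwise disjoint). -/
def Bdy (A B C : Set V) : Prop := Disjoint A B ∧ Disjoint A C ∧ Disjoint B C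

/-! ### The permutation optimization `R` -/

/-- The symmetric edge function induced by the Cayley distance of a vertex
configuration of permutations. -/
def permE {ι : Type*} [Fintype ι] (g : V → Equiv.Perm ι) : Sym2 V → ℝ :=
  Sym2.lift ⟨fun x y => (cayley (g x) (g y) : ℝ),
    fun x y => congrArg Int.cast (cayley_comm (g x) (g y))⟩

/-- The free energy `R(g) = Σ_e w(e) d(g(x),g(y))`. -/
def Renergy {ι : Type*} [Fintype ι] (G : SimpleGraph V) (w : Sym2 V → ℝ)
    (g : V → Equiv.Perm ι) : ℝ :=
  wsum (fun e => w e * permE g e) G.edgeSet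

/-- The optimal value `R` of the permutation optimization. -/
def Rval {ι : Type*} [Fintype ι] (G : SimpleGraph V) (w : Sym2 V → ℝ)
    (A B C : Set V) (g₁ g₂ : Equiv.Perm ι) : ℝ :=
  sInf {a | ∃ g : V → Equiv.Perm ι,
    (∀ v ∈ A, g v = g₁) ∧ (∀ v ∈ B, g v = g₂) ∧ (∀ v ∈ C, g v = 1) ∧
    a = Renergy G w g}

/-! ### The set-partition optimization `Q` -/

/-- The symmetric integer edge function induced by the partition distance of a vertex
configuration of partitions. -/
def partEZ {κ : Type*} (q : V → Setoid κ) : Sym2 V → ℤ :=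
  Sym2.lift ⟨fun x y => pdist (q x) (q y), fun x y => pdist_comm (q x) (q y)⟩

/-- The free energy `Q(q) = Σ_e w(e) d(q(x),q(y))`. -/
def Qenergy {κ : Type*} (G : SimpleGraph V) (w : Sym2 V → ℝ)
    (q : V → Setoid κ) : ℝ :=
  wsum (fun e => w e * (partEZ q e : ℝ)) G.edgeSet

/-- The optimal value `Q` of the set-partition optimization. -/
def Qval {κ : Type*} (G : SimpleGraph V) (w : Sym2 V → ℝ)
    (A B C : Set V) (q₁ q₂ : Setoid κ) : ℝ :=
  sInf {a | ∃ q : V → Setoid κ,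
    (∀ v ∈ A, q v = q₁) ∧ (∀ v ∈ B, q v = q₂) ∧ (∀ v ∈ C, q v = ⊥) ∧
    a = Qenergy G w q}

/-! ### The Boolean optimization `B` -/

/-- The Hamming distance between two bit strings. -/
def ham {κ : Type*} [Fintype κ] (b₁ b₂ : κ → Bool) : ℤ :=
  ∑ k : κ, if b₁ k = b₂ k then 0 else 1

/-- The bit string `b(q)` of a partition: `false` exactly at singlets. -/
def bvec {κ : Type*} (p : Setoid κ) : κ → Bool :=
  fun u => if IsSinglet p u then false else true

/-- Feasibility of `r` for the Boolean program at configuration `b`. -/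
def Bfeas {κ : Type*} [Fintype κ] (G : SimpleGraph V) (A B : Set V) (n : ℕ)
    (b : V → κ → Bool) (r : Sym2 V → ℕ) : Prop :=
  (∀ x ∈ A, ∀ y ∈ B, ∀ L : G.Walk x y,
    2 ∣ wkSum (fun e => (r e : ℤ)) L ∧
    wkSum (fun e => (r e : ℤ)) L ≥
      2 * ((n : ℤ) - if ∀ v ∈ L.support, ∀ k, b v k = true then 1 else 0)) ∧
  (∀ x y : V, G.Adj x y → (r s(x, y) : ℤ) ≥ ⌈(ham (b x) (b y) : ℚ) / 2⌉)

/-- The inner Boolean optimum `B(b)` at a fixed Boolean configuration `b`. -/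
def BvalAt {κ : Type*} [Fintype κ] (G : SimpleGraph V) (w : Sym2 V → ℝ)
    (A B : Set V) (n : ℕ) (b : V → κ → Bool) : ℝ :=
  sInf {a | ∃ r : Sym2 V → ℕ, Bfeas G A B n b r ∧
    a = wsum (fun e => w e * (r e : ℝ)) G.edgeSet}

/-- The optimal value `B` of the Boolean optimization. -/
def Bval (κ : Type*) [Fintype κ] (G : SimpleGraph V) (w : Sym2 V → ℝ)
    (A B C : Set V) (n : ℕ) : ℝ :=
  sInf {a | ∃ b : V → κ → Bool,
    (∀ v ∈ A ∪ B, ∀ k, b v k = true) ∧ (∀ v ∈ C, ∀ k, b v k = false) ∧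
    ∃ r : Sym2 V → ℕ, Bfeas G A B n b r ∧
      a = wsum (fun e => w e * (r e : ℝ)) G.edgeSet}

/-! ### The integer program `I` -/

/-- Feasibility of `(ρ,σ)` for the integer program. -/
def IPfeas (G : SimpleGraph V) (A B C : Set V) (n : ℕ) (ρ σ : Sym2 V → ℕ) : Prop :=
  (∀ x ∈ A, ∀ y ∈ B, ∀ L : G.Walk x y,
    2 ∣ wkSum (fun e => (σ e : ℤ) + (ρ e : ℤ)) L ∧
    wkSum (fun e => (σ e : ℤ) + (ρ e : ℤ)) L ≥
      2 * ((n : ℤ) - if wkSum (fun e => (ρ e : ℤ)) L = 0 then 1 else 0)) ∧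
  (∀ x ∈ A ∪ B, ∀ y ∈ C, ∀ L : G.Walk x y,
    wkSum (fun e => (ρ e : ℤ)) L ≥ (n : ℤ))

/-- The objective of the integer program. -/
def IPobj (G : SimpleGraph V) (w : Sym2 V → ℝ) (ρ σ : Sym2 V → ℕ) : ℝ :=
  wsum (fun e => w e * ((σ e : ℝ) + (ρ e : ℝ))) G.edgeSet

/-- The optimal value `I` of the integer program. -/
def Ival (G : SimpleGraph V) (w : Sym2 V → ℝ) (A B C : Set V) (n : ℕ) : ℝ :=
  sInf {a | ∃ ρ σ : Sym2 V → ℕ, IPfeas G A B C n ρ σ ∧ a = IPobj G w ρ σ}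

/-! ### The ℓ-intersecting cut problem `M` -/

/-- Feasibility for the `ℓ`-intersecting cut problem with boundary sets
`Γ₀, …, Γ_ℓ` and `C`, for a half-integer valued `ϱ`. -/
def Mfeas (G : SimpleGraph V) (Γ : ℕ → Set V) (ℓ : ℕ) (C : Set V)
    (ϱ : Sym2 V → ℚ) : Prop :=
  (∀ e, ∃ j : ℕ, ϱ e = (j : ℚ) / 2) ∧
  (∀ k k' : ℕ, k ≤ ℓ → k' ≤ ℓ → ∀ x ∈ Γ k, ∀ y ∈ Γ k', ∀ L : G.Walk x y,
    ∃ j : ℕ, wkSum ϱ L = |(k : ℚ) - (k' : ℚ)| + (j : ℚ)) ∧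
  (∀ k : ℕ, k ≤ ℓ → ∀ x ∈ Γ k, ∀ y ∈ C, ∀ L : G.Walk x y,
    ∃ j : ℕ, wkSum ϱ L = (ℓ : ℚ) / 2 + (j : ℚ))

/-- The objective of the `ℓ`-intersecting cut problem. -/
def Mobj (G : SimpleGraph V) (w : Sym2 V → ℝ) (ϱ : Sym2 V → ℚ) : ℝ :=
  wsum (fun e => w e * (ϱ e : ℝ)) G.edgeSet

/-- The optimal value `M` of the `ℓ`-intersecting cut problem. -/
def Mval (G : SimpleGraph V) (w : Sym2 V → ℝ) (Γ : ℕ → Set V) (ℓ : ℕ)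
    (C : Set V) : ℝ :=
  sInf {a | ∃ ϱ : Sym2 V → ℚ, Mfeas G Γ ℓ C ϱ ∧ a = Mobj G w ϱ}

/-- The complementary reduced graph `G^c`: the edges of `G` not lying entirely
inside `V'`. -/
def reducedGraph (G : SimpleGraph V) (V' : Set V) : SimpleGraph V where
  Adj x y := G.Adj x y ∧ ¬ (x ∈ V' ∧ y ∈ V')
  symm := by
    constructor
    intro x y h
    exact ⟨h.1.symm, fun hc => h.2 ⟨hc.2, hc.1⟩⟩
  loopless := by
    constructor
    intro x h
    exact G.loopless.irrefl x h.1

end RTN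

/-!
The rank `N - #(p)` of the partition lattice is submodular: for `x ≤ y`, joining with `r` merges
at most as many blocks of `y` as of `x` (add the generating pairs of `r` one at a time).
Coarse graining by `P(g₀)` is joining with `P(g₀)`, transported to the blocks of `P(g₀)` by the
correspondence theorem, so the first inequality and `d(P(g), P(g')) ≥ d(q(g), q(g'))` are
instances of submodularity. For the Cayley bound, `g g'⁻¹` is a product of `N - #(g g'⁻¹)`
transpositions, and multiplying by a transposition either splits or merges one cycle, which
moves the orbit partition by partition distance at most one.
-/

namespace RTN

variable {α : Type*}

def pairSetoid (a b : α) : Setoid α := Relation.EqvGen.setoid fun x y => x = a ∧ y = b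

theorem pairSetoid_rel (a b : α) : pairSetoid a b a b := Relation.EqvGen.rel _ _ ⟨rfl, rfl⟩

theorem pairSetoid_le_iff {a b : α} {s : Setoid α} : pairSetoid a b ≤ s ↔ s a b :=
  ⟨fun h => h (pairSetoid_rel a b), fun h => Setoid.eqvGen_le (by rintro _ _ ⟨rfl, rfl⟩; exact h)⟩

theorem sup_pairSetoid_of_rel {p : Setoid α} {a b : α} (h : p a b) : p ⊔ pairSetoid a b = p :=
  sup_eq_left.2 (pairSetoid_le_iff.2 h)

theorem nb_antitone [Finite α] : Antitone (nb : Setoid α → ℤ) := fun _ _ h => by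
  unfold nb
  exact_mod_cast Nat.card_le_card_of_surjective (Quot.mapRight h)
    (Quot.ind fun x => ⟨Quot.mk _ x, rfl⟩)

theorem nb_le_card [Finite α] (p : Setoid α) : nb p ≤ Nat.card α := by
  unfold nb
  exact_mod_cast Nat.card_le_card_of_surjective _ Quotient.mk_surjective

theorem nb_sup_pairSetoid_add_one [Finite α] {p : Setoid α} {a b : α} (hab : ¬ p a b) :
    nb (p ⊔ pairSetoid a b) + 1 = nb p := by
  set s := p ⊔ pairSetoid a b
  have hps : p ≤ s := le_sup_left
  have hab' : (⟦a⟧ : Quotient p) ≠ ⟦b⟧ := fun h => hab (Quotient.exact h)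
  -- gluing the class of `b` onto that of `a` factors through `Quotient s`, so `π` is injective
  let retract : Quotient p → Quotient p := fun u => if u = ⟦b⟧ then ⟦a⟧ else u
  have hs : s ≤ Setoid.ker (retract ∘ Quotient.mk p) := sup_le
    (fun x y hxy => by simp [Setoid.ker_def, Quotient.sound hxy])
    (pairSetoid_le_iff.2 (by simp [Setoid.ker_def, retract, hab']))
  let π : {u : Quotient p // u ≠ ⟦b⟧} → Quotient s := fun u => Quot.mapRight hps u.1
  have hπ : Function.Bijective π := by
    constructor
    · rintro ⟨u, hu⟩ ⟨v, hv⟩ huv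
      induction u using Quotient.inductionOn
      induction v using Quotient.inductionOn
      have := hs (Quotient.exact huv)
      simp_all [Setoid.ker_def, retract]
    · intro w
      induction w using Quotient.inductionOn with | h x => ?_
      by_cases hx : (⟦x⟧ : Quotient p) = ⟦b⟧
      · refine ⟨⟨⟦a⟧, hab'⟩, Quotient.sound (s.trans ?_ (s.symm (hps (Quotient.exact hx))))⟩
        exact (le_sup_right : pairSetoid a b ≤ s) (pairSetoid_rel a b)
      · exact ⟨⟨⟦x⟧, hx⟩, rfl⟩
  unfold nb
  rw [← Nat.card_congr (Equiv.optionSubtypeNe (⟦b⟧ : Quotient p)), Finite.card_option,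
    Nat.card_eq_of_bijective π hπ]
  norm_cast

theorem nb_sub_nb_sup_pairSetoid_le_of_le [Finite α] {x y : Setoid α} (hxy : x ≤ y) (a b : α) :
    nb y - nb (y ⊔ pairSetoid a b) ≤ nb x - nb (x ⊔ pairSetoid a b) := by
  by_cases hy : y a b
  · rw [sup_pairSetoid_of_rel hy, sub_self, sub_nonneg]
    exact nb_antitone le_sup_left
  · have hx : ¬ x a b := fun h => hy (hxy h)
    linarith [nb_sup_pairSetoid_add_one hx, nb_sup_pairSetoid_add_one hy]

theorem pdist_le_one_of_sup_pairSetoid_eq [Finite α] {p q : Setoid α} {a b : α}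
    (h : p ⊔ pairSetoid a b = q) : pdist p q ≤ 1 := by
  have hpq : p ⊔ q = q := sup_eq_right.2 (h ▸ le_sup_left)
  unfold pdist
  rw [hpq]
  by_cases hab : p a b
  · rw [sup_pairSetoid_of_rel hab] at h
    subst h
    linarith
  · linarith [nb_sup_pairSetoid_add_one hab, h ▸ nb_sup_pairSetoid_add_one hab]

/-- Submodularity of the rank `N - nb` of the partition lattice. -/
theorem nb_sub_nb_sup_le_of_le [Finite α] {x y : Setoid α} (hxy : x ≤ y) (r : Setoid α) :
    nb y - nb (y ⊔ r) ≤ nb x - nb (x ⊔ r) := by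
  have := Fintype.ofFinite α
  have hr : r = (Finset.univ.filter fun c : α × α => r c.1 c.2).sup
      fun c => pairSetoid c.1 c.2 := le_antisymm
    (fun u v huv => Finset.le_sup (f := fun c : α × α => pairSetoid c.1 c.2) (b := (u, v))
      (by simpa using huv) (pairSetoid_rel u v))
    (Finset.sup_le fun c hc => pairSetoid_le_iff.2 (Finset.mem_filter.1 hc).2)
  rw [hr]
  refine Finset.sup_induction (p := fun r => ∀ x y : Setoid α, x ≤ y →
    nb y - nb (y ⊔ r) ≤ nb x - nb (x ⊔ r)) ?_ ?_ ?_ x y hxy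
  · intro x y _
    simp
  · intro r₁ h₁ r₂ h₂ x y hxy
    rw [← sup_assoc, ← sup_assoc]
    linarith [h₁ x y hxy, h₂ (x ⊔ r₁) (y ⊔ r₁) (sup_le_sup_right hxy r₁)]
  · exact fun c _ x y hxy => nb_sub_nb_sup_pairSetoid_le_of_le hxy c.1 c.2

theorem pdist_self (p : Setoid α) : pdist p p = 0 := by
  simp [pdist, two_mul]

theorem pdist_triangle [Finite α] (p q r : Setoid α) :
    pdist p r ≤ pdist p q + pdist q r := by
  have h := nb_sub_nb_sup_le_of_le (le_sup_left : q ≤ q ⊔ r) p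
  have hle : nb (q ⊔ r ⊔ p) ≤ nb (p ⊔ r) :=
    nb_antitone (sup_le le_sup_right (le_sup_right.trans le_sup_left))
  rw [sup_comm q p] at h
  unfold pdist
  linarith

theorem pdist_sup_le [Finite α] (p p' c : Setoid α) : pdist (p ⊔ c) (p' ⊔ c) ≤ pdist p p' := by
  have h := nb_sub_nb_sup_le_of_le (le_sup_left : p ≤ p ⊔ p') c
  have h' := nb_sub_nb_sup_le_of_le (le_sup_right : p' ≤ p ⊔ p') c
  unfold pdist
  rw [← sup_sup_distrib_right]
  linarith

theorem nb_correspondence [Finite α] (c : Setoid α) (s : {s // c ≤ s}) :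
    nb (Setoid.correspondence c s) = nb s.1 := by
  have h : Setoid.correspondence c s = Setoid.ker (Quot.mapRight s.2) := by
    ext u v
    induction u, v using Quotient.inductionOn₂
    exact (Setoid.ker_def.trans (Quotient.eq (r := s.1))).symm
  unfold nb
  rw [h]
  exact congrArg _ (Nat.card_congr (Setoid.quotientQuotientEquivQuotient c s.1 s.2))

theorem coarse_eq_correspondence (g₀ : Equiv.Perm α) (p : Setoid α) :
    coarse g₀ p = Setoid.correspondence (orbitSetoid g₀) ⟨p ⊔ orbitSetoid g₀, le_sup_right⟩ := by
  ext u v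
  induction u, v using Quotient.inductionOn₂ with | h x y => ?_
  constructor
  · rintro ⟨x', y', hx, hy, h⟩
    have hxx' := le_sup_right (a := p) (Quotient.exact hx)
    have hyy' := le_sup_right (a := p) (Quotient.exact hy)
    exact (p ⊔ orbitSetoid g₀).trans ((p ⊔ orbitSetoid g₀).symm hxx')
      ((p ⊔ orbitSetoid g₀).trans h hyy')
  · exact fun h => ⟨x, y, rfl, rfl, h⟩

theorem nb_coarse [Finite α] (g₀ : Equiv.Perm α) (p : Setoid α) :
    nb (coarse g₀ p) = nb (p ⊔ orbitSetoid g₀) := by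
  rw [coarse_eq_correspondence, nb_correspondence]

theorem coarse_sup (g₀ : Equiv.Perm α) (p p' : Setoid α) :
    coarse g₀ p ⊔ coarse g₀ p' = coarse g₀ (p ⊔ p') := by
  let e : Set.Ici (orbitSetoid g₀) ≃o Setoid (Quotient (orbitSetoid g₀)) :=
    Setoid.correspondence (orbitSetoid g₀)
  simp only [coarse_eq_correspondence]
  exact (e.map_sup ⟨_, Set.mem_Ici.2 le_sup_right⟩ ⟨_, Set.mem_Ici.2 le_sup_right⟩).symm.trans
    (congrArg e (Subtype.ext (sup_sup_distrib_right p p' _).symm))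

open Equiv Equiv.Perm

theorem orbitSetoid_le_iff {g : Perm α} {s : Setoid α} :
    orbitSetoid g ≤ s ↔ ∀ x, s x (g x) := by
  refine ⟨fun h x => h ⟨1, by simp⟩, fun h x y ⟨k, hk⟩ => hk ▸ ?_⟩
  clear hk
  induction k using Int.induction_on with
  | zero => exact s.refl x
  | succ k ih =>
    rw [add_comm, zpow_one_add, Perm.mul_apply]
    exact s.trans ih (h _)
  | pred k ih =>
    have := h ((g ^ (-(k : ℤ) - 1)) x)
    rw [← Perm.mul_apply, ← zpow_one_add, add_sub_cancel] at this
    exact s.trans ih (s.symm this)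

theorem rel_swap_apply {s : Setoid α} {a b : α} (h : s a b) (x : α) : s x (swap a b x) := by
  rcases eq_or_ne x a with rfl | hxa
  · simpa using h
  rcases eq_or_ne x b with rfl | hxb
  · simpa using s.symm h
  · rw [swap_apply_of_ne_of_ne hxa hxb]

theorem orbitSetoid_swap_mul_le (a b : α) (g : Perm α) :
    orbitSetoid (swap a b * g) ≤ orbitSetoid g ⊔ pairSetoid a b := by
  refine orbitSetoid_le_iff.2 fun x => ?_
  have hg : (orbitSetoid g ⊔ pairSetoid a b) x (g x) :=
    le_sup_left (b := pairSetoid a b) ⟨1, by simp⟩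
  exact (orbitSetoid g ⊔ pairSetoid a b).trans hg
    (rel_swap_apply (le_sup_right (a := orbitSetoid g) (pairSetoid_rel a b)) (g x))

theorem orbitSetoid_swap_mul_sup (a b : α) (g : Perm α) :
    orbitSetoid (swap a b * g) ⊔ pairSetoid a b = orbitSetoid g ⊔ pairSetoid a b := by
  refine le_antisymm (sup_le (orbitSetoid_swap_mul_le a b g) le_sup_right)
    (sup_le ?_ le_sup_right)
  simpa only [swap_mul_self_mul] using orbitSetoid_swap_mul_le a b (swap a b * g)

theorem sameCycle_swap_mul_of_not_sameCycle [Finite α] {g : Perm α} {a b : α}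
    (h : ¬ g.SameCycle a b) : (swap a b * g).SameCycle a b := by
  set σ := swap a b * g
  by_contra hσ
  -- as long as the `σ`-orbit of `b` has not reached `a`, it follows the `g`-orbit of `b`
  have horbit : ∀ n : ℕ, g.SameCycle b ((σ ^ n) b) := by
    intro n
    induction n with
    | zero => rfl
    | succ n ih =>
      have hgy : g.SameCycle b (g ((σ ^ n) b)) := sameCycle_apply_right.2 ih
      have hga : g ((σ ^ n) b) ≠ a := fun e => h (e ▸ hgy).symm
      have hgb : g ((σ ^ n) b) ≠ b := fun e =>
        hσ (SameCycle.symm ⟨(n + 1 : ℕ), by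
          rw [zpow_natCast, pow_succ', Perm.mul_apply, Perm.mul_apply, e, swap_apply_right]⟩)
      rwa [pow_succ', Perm.mul_apply, Perm.mul_apply, swap_apply_of_ne_of_ne hga hgb]
  obtain ⟨n, hn⟩ := (SameCycle.symm ⟨1, by simp⟩ : σ.SameCycle b (σ⁻¹ b)).exists_nat_pow_eq
  have hgσ : g (σ⁻¹ b) = a := by simp [σ]
  exact h (hgσ ▸ sameCycle_apply_right.2 (hn ▸ horbit n)).symm

theorem pdist_swap_mul_le_one [Finite α] (a b : α) (g : Perm α) :
    pdist (orbitSetoid (swap a b * g)) (orbitSetoid g) ≤ 1 := by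
  have h := orbitSetoid_swap_mul_sup a b g
  by_cases hab : g.SameCycle a b
  · rw [sup_pairSetoid_of_rel (p := orbitSetoid g) hab] at h
    exact pdist_le_one_of_sup_pairSetoid_eq h
  · rw [sup_pairSetoid_of_rel (sameCycle_swap_mul_of_not_sameCycle hab)] at h
    rw [pdist_comm]
    exact pdist_le_one_of_sup_pairSetoid_eq h.symm

theorem ncyc_swap_mul_of_apply_ne [Finite α] {σ : Perm α} {a : α} (ha : σ a ≠ a) :
    ncyc (swap a (σ a) * σ) = ncyc σ + 1 := by
  have hfix : (swap a (σ a) * σ) a = a := by simp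
  have hsplit : ¬ (swap a (σ a) * σ).SameCycle a (σ a) := fun h => ha (h.eq_of_left hfix).symm
  have h := orbitSetoid_swap_mul_sup a (σ a) σ
  rw [sup_pairSetoid_of_rel (p := orbitSetoid σ) (a := a) (b := σ a) ⟨1, by simp⟩] at h
  unfold ncyc
  rw [← nb_sup_pairSetoid_add_one hsplit, h]

/-- Peel off transpositions `swap a (σ a)`: each raises the number of cycles of `σ` by one and
moves the orbit partition by at most one. -/
theorem pdist_mul_le [Fintype α] (σ g : Perm α) :
    pdist (orbitSetoid (σ * g)) (orbitSetoid g) ≤ Fintype.card α - ncyc σ := by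
  induction hn : σ.support.card using Nat.strong_induction_on generalizing σ with
  | _ n ih =>
    by_cases hσ : σ = 1
    · subst hσ
      rw [one_mul, pdist_self, sub_nonneg, ← Nat.card_eq_fintype_card]
      exact nb_le_card _
    obtain ⟨a, ha⟩ : ∃ a, σ a ≠ a := not_forall.1 fun h => hσ (Perm.ext h)
    set σ' := swap a (σ a) * σ
    have hσ' : σ = swap a (σ a) * σ' := (swap_mul_self_mul _ _ σ).symm
    have hind := ih _ (hn ▸ card_support_swap_mul ha) σ' rfl
    have hstep := pdist_swap_mul_le_one a (σ a) (σ' * g)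
    rw [← mul_assoc, ← hσ'] at hstep
    linarith [pdist_triangle (orbitSetoid (σ * g)) (orbitSetoid (σ' * g)) (orbitSetoid g),
      ncyc_swap_mul_of_apply_ne ha]

theorem pdist_le_cayley [Fintype α] (g h : Perm α) :
    pdist (orbitSetoid g) (orbitSetoid h) ≤ cayley g h := by
  simpa [cayley] using pdist_mul_le (g * h⁻¹) h

theorem pdist_coarse [Finite α] (g₀ : Perm α) (p p' : Setoid α) :
    pdist (coarse g₀ p) (coarse g₀ p') = pdist (p ⊔ orbitSetoid g₀) (p' ⊔ orbitSetoid g₀) := by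
  unfold pdist
  rw [coarse_sup, nb_coarse, nb_coarse, nb_coarse, sup_sup_distrib_right]

end RTN

/-- For permutations `g, g', g₀ ∈ S_N`:
`#(g) - #(P(g)∨P(g')) ≥ #(q_{g₀}(g)) - #(q_{g₀}(g) ∨ q_{g₀}(g'))`, and consequently
`d(g,g') ≥ d(P(g),P(g')) ≥ d(q_{g₀}(g), q_{g₀}(g'))`. -/
theorem cayley_dominates_partition_distance {N : ℕ} (g g' g₀ : Equiv.Perm (Fin N)) :
    (RTN.ncyc g - RTN.nb (RTN.orbitSetoid g ⊔ RTN.orbitSetoid g') ≥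
      RTN.nb (RTN.qc g₀ g) - RTN.nb (RTN.qc g₀ g ⊔ RTN.qc g₀ g')) ∧
    RTN.cayley g g' ≥ RTN.pdist (RTN.orbitSetoid g) (RTN.orbitSetoid g') ∧
    RTN.pdist (RTN.orbitSetoid g) (RTN.orbitSetoid g') ≥
      RTN.pdist (RTN.qc g₀ g) (RTN.qc g₀ g') := by
  open RTN in
  refine ⟨?_, pdist_le_cayley g g', ?_⟩
  · rw [qc, qc, coarse_sup, nb_coarse, nb_coarse, ncyc, ← sup_right_comm]
    exact nb_sub_nb_sup_le_of_le le_sup_left _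
  · rw [qc, qc, pdist_coarse]
    exact pdist_sup_le _ _ _
end
end

section
/- For all set partitions q₁,q₂∈P_N, the singlet distance of their singlet patterns equals the Hamming distance of their associated bit strings: d₁(s(q₁),s(q₂))=Σ_{k=1}^{N}|b^k(q₁)−b^k(q₂)|. Consequently d(q₁,q₂)≥⌈(Σ_{k=1}^{N}|b^k(q₁)−b^k(q₂)|)/2⌉. -/
open scoped Classical

noncomputable section

/-! The singlet pattern `s(q)` has the same singlets as `q`, and the singlets of a join are the
common singlets, so both sides of the identity count the positions that are a singlet of exactly
one of `q₁`, `q₂`. For the bound, consider the singlets of `qᵢ` that are absorbed into a larger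
block of `q₁ ∨ q₂`: a block of `q₁ ∨ q₂` made of `a ≥ 2` blocks of `qᵢ` absorbs at most
`a ≤ 2(a - 1)` of them, so `#₁(qᵢ) - #₁(q₁ ∨ q₂) ≤ 2(#(qᵢ) - #(q₁ ∨ q₂))`, and the two
inequalities add up to `d₁(q₁, q₂) ≤ 2 d(q₁, q₂)`. -/

open Finset in
theorem Finset.card_add_two_mul_card_le_of_nontrivial_fibers {β γ : Type*} [Fintype β]
    [Fintype γ] {f : β → γ} (hf : Function.Surjective f) {s : Finset β}
    (hs : ∀ x ∈ s, ∃ y ≠ x, f y = f x) :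
    #s + 2 * Fintype.card γ ≤ 2 * Fintype.card β := by
  have hfiber : ∀ c : γ, #{x ∈ s | f x = c} + 2 ≤ 2 * #{x | f x = c} := by
    intro c
    obtain ⟨x₀, hx₀⟩ := hf c
    have hpos : 0 < #{x | f x = c} := card_pos.mpr ⟨x₀, by simp [hx₀]⟩
    have hsub : #{x ∈ s | f x = c} ≤ #{x | f x = c} :=
      card_le_card (filter_subset_filter _ (subset_univ s))
    rcases (s.filter (f · = c)).eq_empty_or_nonempty with hempty | ⟨x, hx⟩
    · rw [hempty, card_empty]
      omega
    · obtain ⟨hxs, rfl⟩ := mem_filter.mp hx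
      obtain ⟨y, hyx, hy⟩ := hs x hxs
      have : 1 < #{z | f z = f x} := one_lt_card.mpr ⟨x, by simp, y, by simp [hy], hyx.symm⟩
      omega
  have hcard (t : Finset β) : #t = ∑ c, #{x ∈ t | f x = c} :=
    card_eq_sum_card_fiberwise fun x _ => mem_univ (f x)
  calc #s + 2 * Fintype.card γ = ∑ c, (#{x ∈ s | f x = c} + 2) := by
        rw [sum_add_distrib, ← hcard, sum_const, card_univ, smul_eq_mul, mul_comm]
    _ ≤ ∑ c, 2 * #{x | f x = c} := sum_le_sum fun c _ => hfiber c
    _ = 2 * Fintype.card β := by rw [← mul_sum, ← hcard, card_univ]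

namespace RTN

variable {α : Type*}

theorem IsSinglet.of_le {p r : Setoid α} {k : α} (hk : IsSinglet r k) (hpr : p ≤ r) :
    IsSinglet p k :=
  fun y hy => hk y (hpr hy)

/-- `Setoid.ker (· = k)` is the partition `u_k` with blocks `{k}` and its complement. -/
theorem isSinglet_iff_le_ker {s : Setoid α} {k : α} :
    IsSinglet s k ↔ s ≤ Setoid.ker (· = k) := by
  refine ⟨fun h x y hxy => ?_, fun h y hy => ?_⟩
  · by_cases hx : x = k
    · subst hx
      simp [h y hxy]
    · by_cases hy : y = k
      · subst hy
        exact absurd (h x (s.symm hxy)) hx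
      · simp [hx, hy]
  · simpa using (Setoid.ker_def.mp (h hy)).symm

theorem isSinglet_sup_iff {s₁ s₂ : Setoid α} {k : α} :
    IsSinglet (s₁ ⊔ s₂) k ↔ IsSinglet s₁ k ∧ IsSinglet s₂ k := by
  simp only [isSinglet_iff_le_ker, sup_le_iff]

theorem isSinglet_spat_iff {p : Setoid α} {k : α} : IsSinglet (spat p) k ↔ IsSinglet p k := by
  refine ⟨fun h y hy => ?_, fun h y hy => ?_⟩
  · by_contra hyk
    have hk : ¬ IsSinglet p k := fun hs => hyk (hs y hy)
    have hy' : ¬ IsSinglet p y := fun hs => hyk (hs k (p.symm hy)).symm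
    exact hyk (h y (Or.inr ⟨hk, hy'⟩))
  · rcases hy with rfl | ⟨hk, -⟩
    · rfl
    · exact absurd h hk

theorem nS_congr {p q : Setoid α} (h : ∀ k, IsSinglet p k ↔ IsSinglet q k) : nS p = nS q := by
  simp only [nS, h]

theorem sdist_spat_spat (p q : Setoid α) : sdist (spat p) (spat q) = sdist p q := by
  have hsup : nS (spat p ⊔ spat q) = nS (p ⊔ q) :=
    nS_congr fun _ => by simp only [isSinglet_sup_iff, isSinglet_spat_iff]
  rw [sdist, sdist, hsup, nS_congr fun _ => isSinglet_spat_iff,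
    nS_congr fun _ => isSinglet_spat_iff]

theorem nS_eq_sum [Fintype α] (p : Setoid α) :
    nS p = ∑ k, if IsSinglet p k then 1 else 0 := by
  rw [Finset.sum_boole, nS, Nat.card_eq_fintype_card, Fintype.card_subtype]

theorem sdist_eq_sum_abs_bbit [Fintype α] (p q : Setoid α) :
    sdist p q = ∑ k, |bbit p k - bbit q k| := by
  simp only [sdist, nS_eq_sum, isSinglet_sup_iff, Finset.mul_sum, ← Finset.sum_add_distrib,
    ← Finset.sum_sub_distrib]
  refine Finset.sum_congr rfl fun k _ => ?_
  by_cases hp : IsSinglet p k <;> by_cases hq : IsSinglet q k <;> simp [bbit, hp, hq]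

theorem nS_sub_nS_le_two_mul_nb_sub_nb [Fintype α] {p r : Setoid α} (hpr : p ≤ r) :
    nS p - nS r ≤ 2 * (nb p - nb r) := by
  set F : Finset α := {k | IsSinglet p k ∧ ¬ IsSinglet r k}
  have hsinglets : nS p = nS r + F.card := by
    have hpoint : ∀ k, (if IsSinglet p k then (1 : ℤ) else 0)
        = (if IsSinglet r k then 1 else 0) + if IsSinglet p k ∧ ¬ IsSinglet r k then 1 else 0 := by
      intro k
      by_cases hr : IsSinglet r k
      · simp [hr, hr.of_le hpr]
      · simp [hr]
    rw [nS_eq_sum, nS_eq_sum, Finset.sum_congr rfl fun k _ => hpoint k, Finset.sum_add_distrib,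
      Finset.sum_boole, Finset.sum_boole]
  have hinj : Set.InjOn (Quotient.mk p) F := fun k hk k' _ hkk' =>
    ((Finset.mem_filter.mp hk).2.1 k' (Quotient.exact hkk')).symm
  let g : Quotient p → Quotient r :=
    Quotient.lift (Quotient.mk r) fun _ _ h => Quotient.sound (hpr h)
  have hg : Function.Surjective g := Quotient.ind fun x => ⟨Quotient.mk p x, rfl⟩
  have hnontrivial : ∀ c ∈ F.image (Quotient.mk p), ∃ c' ≠ c, g c' = g c := by
    intro c hc
    obtain ⟨k, hk, rfl⟩ := Finset.mem_image.mp hc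
    obtain ⟨hkp, hkr⟩ := (Finset.mem_filter.mp hk).2
    obtain ⟨y, hky, hyk⟩ : ∃ y, r k y ∧ y ≠ k := by
      simpa only [IsSinglet, not_forall, exists_prop] using hkr
    exact ⟨Quotient.mk p y, fun h => hyk (hkp y (p.symm (Quotient.exact h))),
      Quotient.sound (r.symm hky)⟩
  have hblocks := Finset.card_add_two_mul_card_le_of_nontrivial_fibers hg hnontrivial
  rw [Finset.card_image_of_injOn hinj] at hblocks
  rw [hsinglets, nb, nb, Nat.card_eq_fintype_card, Nat.card_eq_fintype_card]
  omega

theorem sdist_le_two_mul_pdist [Fintype α] (p q : Setoid α) : sdist p q ≤ 2 * pdist p q := by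
  have hp := nS_sub_nS_le_two_mul_nb_sub_nb (le_sup_left : p ≤ p ⊔ q)
  have hq := nS_sub_nS_le_two_mul_nb_sub_nb (le_sup_right : q ≤ p ⊔ q)
  rw [sdist, pdist]
  linarith

end RTN

/-- The singlet distance of the singlet patterns equals the Hamming
distance of the associated bit strings:
`d₁(s(q₁),s(q₂)) = Σ_k |b^k(q₁) - b^k(q₂)|`, and consequently
`d(q₁,q₂) ≥ ⌈(Σ_k |b^k(q₁) - b^k(q₂)|)/2⌉`. -/
theorem singlet_dist_eq_hamming {N : ℕ} (q₁ q₂ : Setoid (Fin N)) :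
    RTN.sdist (RTN.spat q₁) (RTN.spat q₂) =
      ∑ k : Fin N, |RTN.bbit q₁ k - RTN.bbit q₂ k| ∧
    RTN.pdist q₁ q₂ ≥ ⌈((∑ k : Fin N, |RTN.bbit q₁ k - RTN.bbit q₂ k| : ℤ) : ℚ) / 2⌉ := by
  rw [RTN.sdist_spat_spat, ← RTN.sdist_eq_sum_abs_bbit, ge_iff_le, Int.ceil_le,
    div_le_iff₀ two_pos]
  refine ⟨rfl, ?_⟩
  exact_mod_cast (RTN.sdist_le_two_mul_pdist q₁ q₂).trans_eq (mul_comm _ _)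
end
end
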